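/- Let d be a nonzero real number, let k, l, s, t be natural numbers with k > l, and let δ be a real number. Then α_{k,s,δ} = α_{l,t,δ} if and only if δ = (k + l + d − 1 − s − t)/d + (t − s)(d − 2 − 2(t + s) + k + l)/(d(k − l)). In particular, for each quadruple (k, l, s, t) with k > l there is exactly one real number δ for which α_{k,s,δ} = α_{l,t,δ}, so that the set of resonant values of δ is exactly the countable set of these numbers with 2s ≤ k and 2t ≤ l. -/

import Mathlib

/-- `b_{k,s} = 2s(d + 2(k - s - 1))`. -/
noncomputable def bCoef (d : ℝ) (k s : ℕ) : ℝ :=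
  2 * (s : ℝ) * (d + 2 * ((k : ℝ) - (s : ℝ) - 1))

/-- `α_{k,s,δ} = -((-k + dδ)² - d(-2k + dδ) + k² - 2k) + b_{k,s}`. -/
noncomputable def alphaCoef (d δ : ℝ) (k s : ℕ) : ℝ :=
  -(((-(k : ℝ) + d * δ) ^ 2 - d * (-(2 * (k : ℝ)) + d * δ) + (k : ℝ) ^ 2 - 2 * (k : ℝ)))
    + bCoef d k s

/-!
The term `-d²δ²` of `α_{k,s,δ}` does not depend on `k`, so `α_{k,s,δ} - α_{l,t,δ}` is affine
in `δ` with slope `2d(k - l)`. For `d ≠ 0` and `k ≠ l` it therefore has exactly one root,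
which is the stated value of `δ`.
-/

lemma alphaCoef_sub_alphaCoef (d δ : ℝ) (k l s t : ℕ) :
    alphaCoef d δ k s - alphaCoef d δ l t =
      2 * d * ((k : ℝ) - l) * δ -
        (2 * ((k : ℝ) - l) * (k + l + d - 1) + bCoef d l t - bCoef d k s) := by
  unfold alphaCoef
  ring

lemma alphaCoef_eq_alphaCoef_iff {d : ℝ} (hd : d ≠ 0) {k l : ℕ} (hkl : k ≠ l) (δ : ℝ)
    (s t : ℕ) :
    alphaCoef d δ k s = alphaCoef d δ l t ↔
      δ = (2 * ((k : ℝ) - l) * (k + l + d - 1) + bCoef d l t - bCoef d k s) /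
        (2 * d * ((k : ℝ) - l)) := by
  have hslope : 2 * d * ((k : ℝ) - l) ≠ 0 :=
    mul_ne_zero (mul_ne_zero two_ne_zero hd) (sub_ne_zero.2 (Nat.cast_injective.ne hkl))
  rw [← sub_eq_zero, alphaCoef_sub_alphaCoef, sub_eq_zero, eq_div_iff hslope, mul_comm]

/-- For nonzero superdimension `d` and `k > l`, the resonance `α_{k,s,δ} = α_{l,t,δ}`
happens exactly for one value of `δ`, given by the explicit formula below. -/
theorem alpha_resonance_iff (d : ℝ) (hd : d ≠ 0) (k l s t : ℕ) (hkl : l < k) (δ : ℝ) :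
    alphaCoef d δ k s = alphaCoef d δ l t ↔
      δ = ((k : ℝ) + (l : ℝ) + d - 1 - (s : ℝ) - (t : ℝ)) / d +
        ((t : ℝ) - (s : ℝ)) * (d - 2 - 2 * ((t : ℝ) + (s : ℝ)) + (k : ℝ) + (l : ℝ)) /
          (d * ((k : ℝ) - (l : ℝ))) := by
  have hkl' : (k : ℝ) - l ≠ 0 := sub_ne_zero.2 (by exact_mod_cast hkl.ne')
  rw [alphaCoef_eq_alphaCoef_iff hd hkl.ne']
  convert Iff.rfl using 2
  unfold bCoef
  field_simp
  ring
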